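/- The first Weyl algebra W over a field k of characteristic p > 0 is a free module of rank p^2 over its center k[x^p, y^p], with basis {x^i y^j : 0 ≤ i, j ≤ p-1}. -/

import Mathlib

/-- The defining relation of the first Weyl algebra: `x * y = y * x + 1`. -/
inductive WeylRel (k : Type*) [CommRing k] :
    FreeAlgebra k (Fin 2) → FreeAlgebra k (Fin 2) → Prop
  | rel : WeylRel k (FreeAlgebra.ι k 0 * FreeAlgebra.ι k 1)
      (FreeAlgebra.ι k 1 * FreeAlgebra.ι k 0 + 1)

/-- The first Weyl algebra `k⟨x,y⟩/(xy - yx - 1)`. -/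
abbrev Weyl (k : Type*) [CommRing k] := RingQuot (WeylRel k)

/-- The image of `x` in the Weyl algebra. -/
noncomputable def Weyl.x (k : Type*) [CommRing k] : Weyl k :=
  RingQuot.mkAlgHom k (WeylRel k) (FreeAlgebra.ι k 0)

/-- The image of `y` in the Weyl algebra. -/
noncomputable def Weyl.y (k : Type*) [CommRing k] : Weyl k :=
  RingQuot.mkAlgHom k (WeylRel k) (FreeAlgebra.ι k 1)

/-! Since `x^p` and `y^p` are central (`[x^p, y] = p x^(p-1) = 0`), every monomial `x^m y^n`
factors as a central element times `x^(m % p) y^(n % p)`, so the reduced monomials span `W` over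
the centre. For independence, the inner derivations `[·, y]` and `[x, ·]` are linear over the
centre and lower exponents, `[x^(i+1) y^j, y] = (i+1) x^i y^j`; as `1, …, p-1` are nonzero in `k`,
they peel off the coefficients of a vanishing combination row by row, down to the independence of
`1`. The centre itself never has to be computed. -/

section CommutatorPowers

variable {A : Type*} [Ring A] {a b : A}

theorem pow_succ_mul_sub_mul_pow_succ (h : a * b - b * a = 1) (n : ℕ) :
    a ^ (n + 1) * b - b * a ^ (n + 1) = (n + 1) • a ^ n := by
  induction n with
  | zero => simpa using h
  | succ n ih =>
    calc a ^ (n + 2) * b - b * a ^ (n + 2)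
        = a * (a ^ (n + 1) * b - b * a ^ (n + 1)) + (a * b - b * a) * a ^ (n + 1) := by
          rw [pow_succ' a (n + 1)]; noncomm_ring
      _ = (n + 2) • a ^ (n + 1) := by
          rw [ih, h, mul_smul_comm, ← pow_succ', one_mul, succ_nsmul _ (n + 1)]

theorem mul_pow_succ_sub_pow_succ_mul (h : a * b - b * a = 1) (n : ℕ) :
    a * b ^ (n + 1) - b ^ (n + 1) * a = (n + 1) • b ^ n := by
  have hop : MulOpposite.op b * MulOpposite.op a - MulOpposite.op a * MulOpposite.op b = 1 := by
    simpa using congrArg MulOpposite.op h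
  apply MulOpposite.op_injective
  simp only [MulOpposite.op_sub, MulOpposite.op_mul, MulOpposite.op_smul, MulOpposite.op_pow]
  exact pow_succ_mul_sub_mul_pow_succ hop n

end CommutatorPowers

theorem linearIndependent_of_lowering {R M ι : Type*} [Ring R] [AddCommGroup M] [Module R M]
    [Fintype ι] (δ : M →ₗ[R] M) (v : ℕ → ι → M) (hv₀ : LinearIndependent R (v 0))
    (hδ₀ : ∀ j, δ (v 0 j) = 0) (hδ : ∀ i j, δ (v (i + 1) j) = (i + 1) • v i j) {n : ℕ}
    (hreg : ∀ m, 0 < m → m < n → IsSMulRegular R m) :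
    LinearIndependent R (fun q : Fin n × ι => v q.1 q.2) := by
  induction n with
  | zero => exact linearIndependent_empty_type
  | succ n ih =>
    have ih := Fintype.linearIndependent_iff.mp
      (ih fun m hm hmn => hreg m hm (Nat.lt_succ_of_lt hmn))
    rw [Fintype.linearIndependent_iff]
    intro g hg
    simp only [Fintype.sum_prod_type, Fin.sum_univ_succ, Fin.val_zero, Fin.val_succ] at hg
    have hsucc : ∀ (i : Fin n) j, g (i.succ, j) = 0 := by
      have hδg := congrArg δ hg
      simp only [map_add, map_sum, map_smul, hδ₀, hδ, smul_zero, Finset.sum_const_zero,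
        zero_add, map_zero] at hδg
      intro i j
      refine (hreg (i + 1) i.succ_pos (by omega)).right_eq_zero_of_smul
        (ih (fun q => (q.1 + 1 : ℕ) • g (q.1.succ, q.2)) ?_ (i, j))
      rw [Fintype.sum_prod_type, ← hδg]
      refine Finset.sum_congr rfl fun i _ => Finset.sum_congr rfl fun j _ => ?_
      rw [smul_assoc, smul_comm]
    have hzero : ∀ j, g (0, j) = 0 := by
      simp only [hsucc, zero_smul, Finset.sum_const_zero, add_zero] at hg
      exact Fintype.linearIndependent_iff.mp hv₀ _ hg
    rintro ⟨i, j⟩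
    cases i using Fin.cases with
    | zero => exact hzero j
    | succ i => exact hsucc i j

theorem Submodule.span_eq_top_of_mul_mem {R A : Type*} [CommSemiring R] [Semiring A] [Algebra R A]
    {s t : Set A} (hs : Algebra.adjoin R s = ⊤) (h1 : 1 ∈ span R t)
    (hmul : ∀ a ∈ s, ∀ b ∈ t, a * b ∈ span R t) : span R t = ⊤ := by
  have hgen : ∀ a ∈ s, ∀ b ∈ span R t, a * b ∈ span R t := fun a ha =>
    span_le (p := (span R t).comap (LinearMap.mulLeft R a)).mpr (hmul a ha)
  have hall : ∀ a : A, ∀ b ∈ span R t, a * b ∈ span R t := by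
    intro a
    have ha : a ∈ Algebra.adjoin R s := hs ▸ Algebra.mem_top
    induction ha using Algebra.adjoin_induction with
    | mem a ha => exact hgen a ha
    | algebraMap r => exact fun b hb => Algebra.smul_def r b ▸ smul_mem _ r hb
    | add a a' _ _ ha ha' =>
      exact fun b hb => (add_mul a a' b).symm ▸ add_mem (ha b hb) (ha' b hb)
    | mul a a' _ _ ha ha' => exact fun b hb => (mul_assoc a a' b).symm ▸ ha _ (ha' b hb)
  exact eq_top_iff.mpr fun a _ => mul_one a ▸ hall a 1 h1

instance Subalgebra.center.smulCommClass_left {R A : Type*} [CommSemiring R] [Semiring A]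
    [Algebra R A] : SMulCommClass (Subalgebra.center R A) A A where
  smul_comm c a b := by
    simp only [Subalgebra.smul_def, smul_eq_mul, ← mul_assoc, Subalgebra.mem_center_iff.mp c.2 a]

theorem nsmul_char_eq_zero {k M : Type*} [CommRing k] [AddCommGroup M] [Module k M]
    (p : ℕ) [CharP k p] (w : M) : p • w = 0 := by
  rw [← Nat.cast_smul_eq_nsmul k, CharP.cast_eq_zero, zero_smul]

theorem isSMulRegular_natCast_of_not_dvd {k M : Type*} [Field k] [AddCommGroup M] [Module k M]
    (p : ℕ) [CharP k p] {m : ℕ} (hm : ¬ p ∣ m) : IsSMulRegular M m := by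
  intro a b hab
  refine smul_right_injective M ((CharP.cast_eq_zero_iff k p m).not.mpr hm) ?_
  simpa only [Nat.cast_smul_eq_nsmul] using hab

namespace Weyl

section CommRing

variable (k : Type*) [CommRing k]

theorem x_mul_y_sub_y_mul_x : x k * y k - y k * x k = 1 := by
  have h := RingQuot.mkAlgHom_rel k (WeylRel.rel (k := k))
  simp only [map_mul, map_add, map_one] at h
  rw [x, y, h, add_sub_cancel_left]

theorem adjoin_x_y : Algebra.adjoin k {x k, y k} = ⊤ := by
  have hxy : ({x k, y k} : Set (Weyl k)) =
      RingQuot.mkAlgHom k (WeylRel k) '' Set.range (FreeAlgebra.ι k) := by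
    ext w
    simp [Fin.exists_fin_two, x, y, eq_comm]
  rw [hxy, Algebra.adjoin_image, FreeAlgebra.adjoin_range_ι, Algebra.map_top,
    (AlgHom.range_eq_top _).mpr (RingQuot.mkAlgHom_surjective k (WeylRel k))]

theorem mem_center_of_commute {w : Weyl k} (hx : Commute w (x k)) (hy : Commute w (y k)) :
    w ∈ Subalgebra.center k (Weyl k) :=
  Subalgebra.mem_center_iff.mpr fun b =>
    (Algebra.commute_of_mem_adjoin_of_forall_mem_commute ((adjoin_x_y k).symm ▸ Algebra.mem_top)
      (by simp [hx, hy])).eq.symm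

theorem span_x_pow_mul_y_pow :
    Submodule.span k (Set.range fun q : ℕ × ℕ => x k ^ q.1 * y k ^ q.2) = ⊤ := by
  set S := Submodule.span k (Set.range fun q : ℕ × ℕ => x k ^ q.1 * y k ^ q.2)
  have mem (i j : ℕ) : x k ^ i * y k ^ j ∈ S := Submodule.subset_span ⟨(i, j), rfl⟩
  refine Submodule.span_eq_top_of_mul_mem (adjoin_x_y k) (by simpa using mem 0 0) ?_
  rintro a ha _ ⟨⟨i, j⟩, rfl⟩
  rcases ha with rfl | rfl
  · simpa only [← mul_assoc, ← pow_succ'] using mem (i + 1) j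
  · cases i with
    | zero => simpa only [pow_zero, one_mul, ← pow_succ'] using mem 0 (j + 1)
    | succ i =>
      have hyx : y k * x k ^ (i + 1) = x k ^ (i + 1) * y k - (i + 1) • x k ^ i := by
        rw [← pow_succ_mul_sub_mul_pow_succ (x_mul_y_sub_y_mul_x k), sub_sub_cancel]
      rw [← mul_assoc, hyx, sub_mul, smul_mul_assoc, mul_assoc, ← pow_succ']
      exact sub_mem (mem _ _) (Submodule.smul_of_tower_mem _ _ (mem _ _))

variable (p : ℕ) [CharP k p]

theorem x_pow_mem_center : x k ^ p ∈ Subalgebra.center k (Weyl k) := by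
  obtain _ | p := p
  · exact pow_zero (x k) ▸ one_mem _
  refine mem_center_of_commute k (Commute.self_pow _ _).symm (sub_eq_zero.mp ?_)
  rw [pow_succ_mul_sub_mul_pow_succ (x_mul_y_sub_y_mul_x k), nsmul_char_eq_zero (k := k) (p + 1)]

theorem y_pow_mem_center : y k ^ p ∈ Subalgebra.center k (Weyl k) := by
  obtain _ | p := p
  · exact pow_zero (y k) ▸ one_mem _
  refine mem_center_of_commute k (sub_eq_zero.mp ?_).symm (Commute.self_pow _ _).symm
  rw [mul_pow_succ_sub_pow_succ_mul (x_mul_y_sub_y_mul_x k), nsmul_char_eq_zero (k := k) (p + 1)]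

theorem x_pow_mul_y_pow_mul_of_dvd {a b : ℕ} (i j : ℕ) (hb : p ∣ b) :
    x k ^ a * y k ^ b * (x k ^ i * y k ^ j) = x k ^ (a + i) * y k ^ (b + j) := by
  obtain ⟨b, rfl⟩ := hb
  have hcomm : y k ^ (p * b) * x k ^ i = x k ^ i * y k ^ (p * b) :=
    Subalgebra.mem_center_iff.mp (pow_mul (y k) p b ▸ pow_mem (y_pow_mem_center k p) b) _ |>.symm
  rw [pow_add, pow_add, mul_assoc, ← mul_assoc (y k ^ _), hcomm]
  noncomm_ring

theorem span_center_x_pow_mul_y_pow [NeZero p] :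
    Submodule.span (Subalgebra.center k (Weyl k))
      (Set.range fun q : Fin p × Fin p => x k ^ (q.1 : ℕ) * y k ^ (q.2 : ℕ)) = ⊤ := by
  rw [← Submodule.restrictScalars_eq_top_iff k, eq_top_iff, ← span_x_pow_mul_y_pow k,
    Submodule.span_le]
  rintro _ ⟨⟨m, n⟩, rfl⟩
  let c : Subalgebra.center k (Weyl k) := ⟨x k ^ (p * (m / p)) * y k ^ (p * (n / p)),
    mul_mem (pow_mul (x k) p _ ▸ pow_mem (x_pow_mem_center k p) _)
      (pow_mul (y k) p _ ▸ pow_mem (y_pow_mem_center k p) _)⟩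
  have hmn : x k ^ m * y k ^ n = c • (x k ^ (m % p) * y k ^ (n % p)) := by
    rw [Subalgebra.smul_def, smul_eq_mul, x_pow_mul_y_pow_mul_of_dvd k p _ _ (dvd_mul_right p _),
      Nat.div_add_mod, Nat.div_add_mod]
  show x k ^ m * y k ^ n ∈ _
  rw [hmn]
  exact Submodule.smul_mem _ c (Submodule.subset_span
    ⟨(⟨m % p, Nat.mod_lt _ (NeZero.pos p)⟩, ⟨n % p, Nat.mod_lt _ (NeZero.pos p)⟩), rfl⟩)

end CommRing

section Field

variable (k : Type*) [Field k] (p : ℕ) [CharP k p]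

theorem isSMulRegular_center {m : ℕ} (hm : 0 < m) (hmp : m < p) :
    IsSMulRegular (Subalgebra.center k (Weyl k)) m :=
  isSMulRegular_natCast_of_not_dvd (k := k) (M := Subalgebra.center k (Weyl k)) p
    (Nat.not_dvd_of_pos_of_lt hm hmp)

theorem linearIndependent_y_pow :
    LinearIndependent (Subalgebra.center k (Weyl k)) fun j : Fin p => y k ^ (j : ℕ) := by
  have hone : LinearIndependent (Subalgebra.center k (Weyl k)) fun _ : Unit => y k ^ 0 := by
    refine Fintype.linearIndependent_iff (R := Subalgebra.center k (Weyl k)) (M := Weyl k) |>.mpr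
      fun g hg _ => ?_
    simpa [Subalgebra.smul_def] using hg
  have := linearIndependent_of_lowering (R := Subalgebra.center k (Weyl k))
    (LinearMap.mulLeft _ (x k) - LinearMap.mulRight _ (x k)) (fun j (_ : Unit) => y k ^ j) hone
    (fun _ => by simp) (fun j _ => mul_pow_succ_sub_pow_succ_mul (x_mul_y_sub_y_mul_x k) j)
    fun _ => isSMulRegular_center k p
  exact this.comp (fun j => (j, ())) fun _ _ h => congrArg Prod.fst h

theorem linearIndependent_x_pow_mul_y_pow :
    LinearIndependent (Subalgebra.center k (Weyl k))
      fun q : Fin p × Fin p => x k ^ (q.1 : ℕ) * y k ^ (q.2 : ℕ) := by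
  refine linearIndependent_of_lowering (R := Subalgebra.center k (Weyl k))
    (LinearMap.mulRight _ (y k) - LinearMap.mulLeft _ (y k))
    (fun i (j : Fin p) => x k ^ i * y k ^ (j : ℕ))
    (by simpa using linearIndependent_y_pow k p) (fun j => ?_) (fun i j => ?_)
    fun _ => isSMulRegular_center k p
  · simp [pow_mul_comm']
  · simp only [LinearMap.sub_apply, LinearMap.mulRight_apply, LinearMap.mulLeft_apply]
    rw [mul_assoc, pow_mul_comm', ← mul_assoc, ← mul_assoc, ← sub_mul,
      pow_succ_mul_sub_mul_pow_succ (x_mul_y_sub_y_mul_x k), smul_mul_assoc]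

end Field

end Weyl

theorem weyl_free_over_center (k : Type*) [Field k]
    (p : ℕ) (hp : p.Prime) [CharP k p] :
    ∃ b : Module.Basis (Fin p × Fin p) (Subalgebra.center k (Weyl k)) (Weyl k),
      ∀ ij : Fin p × Fin p,
        b ij = Weyl.x k ^ (ij.1 : ℕ) * Weyl.y k ^ (ij.2 : ℕ) := by
  have : NeZero p := ⟨hp.ne_zero⟩
  exact ⟨.mk (Weyl.linearIndependent_x_pow_mul_y_pow k p)
    (Weyl.span_center_x_pow_mul_y_pow k p).ge, fun _ => Module.Basis.mk_apply _ _ _⟩
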